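/- arXiv:2105.03030 — 3 statements merged into one kernel-verified Lean document; each statement's English description precedes it below -/
import Mathlib

section
/- Let N be a positive integer and let a > a' be nonnegative rationals. If a = b₀/c₀ > b₁/c₁ > ⋯ > b_r/c_r = a' is an N-path, meaning each fraction is in lowest terms and bᵢ/cᵢ − bᵢ₊₁/cᵢ₊₁ = N/(lcm(N,cᵢ)·lcm(N,cᵢ₊₁)) for all i, then the sequence N·b₀/c₀ > N·b₁/c₁ > ⋯ > N·b_r/c_r (each N·bᵢ/cᵢ written in lowest terms) is a 1-path; in particular the reduced denominator of N·(bᵢ/cᵢ) equals cᵢ/gcd(N,cᵢ) = lcm(N,cᵢ)/N. -/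
theorem den_nat_mul' (N : ℕ) (q : ℚ) : ((N:ℚ)*q).den = q.den / Nat.gcd N q.den := by
  have h : (N:ℚ)*q = Rat.divInt ((N : ℤ)*q.num) (q.den : ℤ) := by
    rw [Rat.divInt_eq_div]
    push_cast
    rw [mul_div_assoc, Rat.num_div_den q]
  rw [h, Rat.den_divInt]
  simp only [Int.natCast_eq_zero, q.den_ne_zero, if_false]
  rw [Int.gcd, Int.natAbs_mul, Int.natAbs_natCast, Int.natAbs_natCast, Nat.gcd_comm q.den,
    Nat.Coprime.gcd_mul_right_cancel N q.reduced]

theorem lcm_div_eq' (N d : ℕ) (hN : 0 < N) : Nat.lcm N d / N = d / Nat.gcd N d := by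
  have h : Nat.lcm N d = N * (d / Nat.gcd N d) := by
    rw [Nat.lcm, Nat.mul_div_assoc N (Nat.gcd_dvd_right N d)]
  rw [h, Nat.mul_div_cancel_left _ hN]

/-- Scaling an `N`-path by `N` yields a `1`-path.  If `lam 0 > ⋯ > lam r` is a
sequence of nonnegative rationals with
`lam i - lam (i+1) = N / (lcm N (lam i).den * lcm N (lam (i+1)).den)`,
then the reduced denominator of `N * lam i` equals
`(lam i).den / gcd N (lam i).den = lcm N (lam i).den / N`, and consecutive
differences of the scaled sequence are `1/(den * den)`. -/
theorem NPath_scale_is_onePath (N r : ℕ) (hN : 0 < N) (lam : ℕ → ℚ)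
    (hnonneg : ∀ i ≤ r, 0 ≤ lam i)
    (hdec : ∀ i < r, lam (i+1) < lam i)
    (hdiff : ∀ i < r, lam i - lam (i+1)
      = (N : ℚ) / ((Nat.lcm N (lam i).den : ℚ) * (Nat.lcm N (lam (i+1)).den : ℚ))) :
    (∀ i ≤ r, ((N : ℚ) * lam i).den = (lam i).den / Nat.gcd N (lam i).den ∧
      ((N : ℚ) * lam i).den = Nat.lcm N (lam i).den / N) ∧
    (∀ i < r, (N : ℚ) * lam i - (N : ℚ) * lam (i+1)
      = 1 / ((((N : ℚ) * lam i).den : ℚ) * (((N : ℚ) * lam (i+1)).den : ℚ))) := by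
  have hden : ∀ i, ((N : ℚ) * lam i).den = Nat.lcm N (lam i).den / N := fun i => by
    rw [den_nat_mul', lcm_div_eq' _ _ hN]
  have hcast : ∀ i, (((N : ℚ) * lam i).den : ℚ) = (Nat.lcm N (lam i).den : ℚ) / N := fun i => by
    rw [hden i, Nat.cast_div (Nat.dvd_lcm_left N _) (by exact_mod_cast hN.ne')]
  refine ⟨fun i _ => ⟨den_nat_mul' N (lam i), hden i⟩, fun i hi => ?_⟩
  have hNQ : (N : ℚ) ≠ 0 := by exact_mod_cast hN.ne'
  have hL1 : (Nat.lcm N (lam i).den : ℚ) ≠ 0 := by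
    exact_mod_cast (Nat.lcm_ne_zero hN.ne' (lam i).den_ne_zero)
  have hL2 : (Nat.lcm N (lam (i+1)).den : ℚ) ≠ 0 := by
    exact_mod_cast (Nat.lcm_ne_zero hN.ne' (lam (i+1)).den_ne_zero)
  rw [← mul_sub, hdiff i hi, hcast i, hcast (i+1)]
  field_simp
end

section
/- Let λ ∈ (0,1) be rational with reduced denominator e, and suppose μ ∈ [0, λ) is a rational with reduced denominator e* lying on the shortest 1-path from λ to 0. Then λ − μ ≥ 1/(e·e*), with equality if and only if μ is the term immediately following λ on that path. -/
/-- A 1-path: a strictly decreasing list of rationals whose consecutive differences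
are `1/(den * den)`. -/
def IsOnePath (l : List ℚ) : Prop :=
  l.Chain' fun p q => q < p ∧ p - q = 1 / ((p.den : ℚ) * (q.den : ℚ))

/-- A shortest 1-path: a 1-path no proper sublist of which, with the same endpoints,
is again a 1-path. -/
def IsShortestOnePath (l : List ℚ) : Prop :=
  IsOnePath l ∧ ∀ l' : List ℚ, l'.Sublist l → l' ≠ l →
    l'.head? = l.head? → l'.getLast? = l.getLast? → ¬ IsOnePath l'

private lemma gap_lower (a b : ℚ) (h : b < a) :
    1 / ((a.den : ℚ) * (b.den : ℚ)) ≤ a - b := by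
  have ha : (0:ℚ) < (a.den : ℚ) := by exact_mod_cast a.pos
  have hb : (0:ℚ) < (b.den : ℚ) := by exact_mod_cast b.pos
  have hna := Rat.num_div_den a
  have hnb := Rat.num_div_den b
  rw [div_eq_iff (ne_of_gt ha)] at hna
  rw [div_eq_iff (ne_of_gt hb)] at hnb
  have key : a - b = ((a.num * b.den - b.num * a.den : ℤ) : ℚ) / ((a.den : ℚ) * b.den) := by
    rw [eq_div_iff (by positivity)]
    push_cast
    rw [hna, hnb]; ring
  have hn : (0:ℤ) < a.num * b.den - b.num * a.den := by
    by_contra hc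
    push_neg at hc
    have : ((a.num * b.den - b.num * a.den : ℤ) : ℚ) ≤ 0 := by exact_mod_cast hc
    have : a - b ≤ 0 := by
      rw [key]
      exact div_nonpos_of_nonpos_of_nonneg this (by positivity)
    linarith
  have hn1 : (1:ℚ) ≤ ((a.num * b.den - b.num * a.den : ℤ) : ℚ) := by exact_mod_cast hn
  rw [key]
  gcongr

/-- If `mu ∈ [0, lam)` lies on the shortest 1-path from `lam ∈ (0,1)` to `0`,
then `lam - mu ≥ 1/(lam.den * mu.den)`, with equality iff `mu` is the entry
immediately following `lam` on the path. -/
theorem shortest_onePath_gap (lam mu : ℚ) (h0 : 0 < lam) (h1 : lam < 1)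
    (hmu0 : 0 ≤ mu) (hmulam : mu < lam) (l : List ℚ)
    (hl : IsShortestOnePath l) (hhead : l.head? = some lam)
    (hlast : l.getLast? = some 0) (hmem : mu ∈ l) :
    1 / ((lam.den : ℚ) * (mu.den : ℚ)) ≤ lam - mu ∧
    (lam - mu = 1 / ((lam.den : ℚ) * (mu.den : ℚ)) ↔ l[1]? = some mu) := by
  obtain ⟨t, rfl⟩ : ∃ t, l = lam :: t := by
    cases l with
    | nil => simp at hhead
    | cons a t => exact ⟨t, by simp_all⟩
  refine ⟨gap_lower lam mu hmulam, ?_, ?_⟩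
  · -- equality → l[1]? = some mu
    intro heq
    have hmut : mu ∈ t := by
      rcases List.mem_cons.mp hmem with h | h
      · exact absurd h (by intro h'; rw [h'] at hmulam; exact lt_irrefl _ hmulam)
      · exact h
    obtain ⟨s, t2, rfl⟩ := List.append_of_mem hmut
    cases s with
    | nil => simp
    | cons x s' =>
      exfalso
      have hsuf : (mu :: t2) <:+ lam :: (x :: s') ++ mu :: t2 := ⟨lam :: x :: s', by simp⟩
      have hchain : IsOnePath (lam :: mu :: t2) := by
        refine List.isChain_cons_cons.mpr ⟨⟨hmulam, heq⟩, ?_⟩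
        exact (hl.1).suffix hsuf
      refine hl.2 (lam :: mu :: t2) ?_ ?_ ?_ ?_ hchain
      · exact (List.sublist_append_right (x :: s') (mu :: t2)).cons₂ lam
      · intro h
        apply_fun List.length at h
        simp at h
        omega
      · simp
      · rw [show lam :: (x :: s' ++ mu :: t2) = (lam :: x :: s') ++ (mu :: t2) by simp,
          List.getLast?_append]
        obtain ⟨y, hy⟩ := Option.isSome_iff_exists.mp
          (List.getLast?_isSome.mpr (by simp : (mu :: t2) ≠ []))
        simp [hy]
  · -- l[1]? = some mu → equality
    intro h
    cases t with
    | nil => simp at h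
    | cons a t' =>
      have : a = mu := by simpa using h
      subst this
      exact (List.isChain_cons_cons.mp hl.1).1.2
end

section
/- Concatenation of shortest 1-paths at a denominator maximum: if 1 = b₀/c₀ > b₁/c₁ > ⋯ > b_m/c_m > ⋯ > b_r/c_r = 0 is a sequence of rationals in lowest terms such that consecutive differences equal 1/(cᵢcᵢ₊₁), and the denominators satisfy c₀ < c₁ < ⋯ < c_m and c_m > c_{m+1} > ⋯ > c_r, then the subsequence from b₀/c₀ to b_m/c_m is the shortest 1-path from 1 to b_m/c_m and the subsequence from b_m/c_m to b_r/c_r is the shortest 1-path from b_m/c_m to 0. As a concrete instance, 1 > 1/2 > 2/5 > 3/8 and 3/8 > 1/3 > 0 are shortest 1-paths. -/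
namespace List

variable {α : Type*} {R : α → α → Prop}

theorem eq_of_sublist_of_isChain_of_head?_of_getLast? {l l' : List α} (hnd : l.Nodup)
    (hskip : ∀ i j (hi : i < l.length) (hj : j < l.length), i + 1 < j → ¬ R l[i] l[j])
    (hsub : l' <+ l) (hl' : l'.IsChain R) (hhead : l'.head? = l.head?)
    (hlast : l'.getLast? = l.getLast?) : l' = l := by
  induction l generalizing l' with
  | nil => exact sublist_nil.mp hsub
  | cons a t ih =>
    obtain _ | ⟨x, t'⟩ := l'
    · simp at hhead
    obtain rfl : x = a := by simpa using hhead
    have hsub' : t' <+ t := cons_sublist_cons.mp hsub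
    obtain _ | ⟨b, t''⟩ := t'
    · obtain _ | ⟨c, t₀⟩ := t
      · rfl
      rw [getLast?_singleton, getLast?_cons_cons] at hlast
      exact absurd (mem_of_getLast? hlast.symm) (nodup_cons.mp hnd).1
    obtain ⟨j, hj, rfl⟩ := getElem_of_mem (hsub'.subset mem_cons_self)
    obtain rfl : j = 0 := by
      by_contra hj0
      exact hskip 0 (j + 1) (by simp) (by simpa using hj) (by omega) (isChain_cons_cons.mp hl').1
    obtain _ | ⟨c, t₀⟩ := t
    · simp at hj
    refine congrArg (x :: ·) (ih (nodup_cons.mp hnd).2 (fun i j hi hj hij => ?_) hsub'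
      (isChain_cons_cons.mp hl').2 rfl (by simpa only [getLast?_cons_cons] using hlast))
    exact hskip (i + 1) (j + 1) (by simpa using hi) (by simpa using hj) (by omega)

end List

def OneStep (p q : ℚ) : Prop :=
  q < p ∧ p - q = 1 / ((p.den : ℚ) * (q.den : ℚ))

theorem isOnePath_iff_isChain {l : List ℚ} : IsOnePath l ↔ l.IsChain OneStep := Iff.rfl

theorem IsOnePath.nodup {l : List ℚ} (h : IsOnePath l) : l.Nodup :=
  (List.isChain_iff_pairwise.mp (h.imp fun _ _ hpq => hpq.1)).imp ne_of_gt

theorem isShortestOnePath_of_forall_not_oneStep {l : List ℚ} (h : IsOnePath l)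
    (hskip : ∀ i j (hi : i < l.length) (hj : j < l.length), i + 1 < j → ¬ OneStep l[i] l[j]) :
    IsShortestOnePath l :=
  ⟨h, fun _ hsub hne hhead hlast hl' =>
    hne (List.eq_of_sublist_of_isChain_of_head?_of_getLast? h.nodup hskip hsub hl' hhead hlast)⟩

namespace OneStep

variable {p q s : ℚ}

theorem not_oneStep_of_lt_of_den_lt (h : OneStep p q) (hs : s < q) (hd : q.den < s.den) :
    ¬ OneStep p s := fun ⟨_, hps⟩ => by
  have : 1 / ((p.den : ℚ) * s.den) < 1 / ((p.den : ℚ) * q.den) := by gcongr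
  linarith [h.2]

theorem not_oneStep_of_gt_of_den_lt (h : OneStep q s) (hp : q < p) (hd : q.den < p.den) :
    ¬ OneStep p s := fun ⟨_, hps⟩ => by
  have : 1 / ((p.den : ℚ) * s.den) < 1 / ((q.den : ℚ) * s.den) := by gcongr
  linarith [h.2]

end OneStep

section Sequence

variable {f : ℕ → ℚ} {n : ℕ}

theorem isOnePath_map_range (hf : ∀ i < n, OneStep (f i) (f (i + 1))) :
    IsOnePath ((List.range (n + 1)).map f) := by
  rw [isOnePath_iff_isChain, List.isChain_map, List.isChain_range_succ]
  exact hf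

theorem strictAntiOn_Iic_of_oneStep (hf : ∀ i < n, OneStep (f i) (f (i + 1))) :
    StrictAntiOn f (Set.Iic n) :=
  strictAntiOn_Iic_of_succ_lt fun i hi => by simpa using (hf i hi).1

theorem isShortestOnePath_map_range (hf : ∀ i < n, OneStep (f i) (f (i + 1)))
    (hskip : ∀ i j, i + 1 < j → j ≤ n → ¬ OneStep (f i) (f j)) :
    IsShortestOnePath ((List.range (n + 1)).map f) := by
  refine isShortestOnePath_of_forall_not_oneStep (isOnePath_map_range hf) fun i j hi hj hij => ?_
  simp only [List.length_map, List.length_range] at hi hj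
  simpa using hskip i j hij (by omega)

theorem isShortestOnePath_map_range_of_strictMonoOn_den
    (hf : ∀ i < n, OneStep (f i) (f (i + 1)))
    (hden : StrictMonoOn (fun i => (f i).den) (Set.Iic n)) :
    IsShortestOnePath ((List.range (n + 1)).map f) := by
  refine isShortestOnePath_map_range hf fun i j hij hjn => ?_
  have hi : i + 1 ∈ Set.Iic n := by simp only [Set.mem_Iic]; omega
  exact (hf i (by omega)).not_oneStep_of_lt_of_den_lt
    (strictAntiOn_Iic_of_oneStep hf hi hjn hij) (hden hi hjn hij)

theorem isShortestOnePath_map_range_of_strictAntiOn_den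
    (hf : ∀ i < n, OneStep (f i) (f (i + 1)))
    (hden : StrictAntiOn (fun i => (f i).den) (Set.Iic n)) :
    IsShortestOnePath ((List.range (n + 1)).map f) := by
  refine isShortestOnePath_map_range hf fun i j hij hjn => ?_
  obtain ⟨k, rfl⟩ : ∃ k, j = k + 1 := ⟨j - 1, by omega⟩
  have hk : k ∈ Set.Iic n := by simp only [Set.mem_Iic]; omega
  have hi : i ∈ Set.Iic n := by simp only [Set.mem_Iic]; omega
  exact (hf k (by omega)).not_oneStep_of_gt_of_den_lt
    (strictAntiOn_Iic_of_oneStep hf hi hk (by omega)) (hden hi hk (by omega))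

end Sequence

theorem isShortestOnePath_split_at_den_max (r m : ℕ) (hmr : m ≤ r) (lam : ℕ → ℚ)
    (hdiff : ∀ i < r, OneStep (lam i) (lam (i + 1)))
    (hinc : ∀ i < m, (lam i).den < (lam (i + 1)).den)
    (hdec : ∀ i, m ≤ i → i < r → (lam (i + 1)).den < (lam i).den) :
    IsShortestOnePath ((List.range (m + 1)).map lam) ∧
    IsShortestOnePath ((List.range (r - m + 1)).map fun i => lam (m + i)) :=
  ⟨isShortestOnePath_map_range_of_strictMonoOn_den (fun i hi => hdiff i (by omega))
      (strictMonoOn_Iic_of_lt_succ fun i hi => by simpa using hinc i hi),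
    isShortestOnePath_map_range_of_strictAntiOn_den (fun i hi => hdiff (m + i) (by omega))
      (strictAntiOn_Iic_of_succ_lt fun i hi => by
        simpa [← add_assoc] using hdec (m + i) (by omega) (by omega))⟩

theorem onePath_split_at_denominator_max_general (r m : ℕ) (hmr : m < r)
    (lam : ℕ → ℚ)
    (hdiff : ∀ i < r, lam (i+1) < lam i ∧
      lam i - lam (i+1) = 1 / (((lam i).den : ℚ) * ((lam (i+1)).den : ℚ)))
    (hinc : ∀ i < m, (lam i).den < (lam (i+1)).den)
    (hdec : ∀ i, m ≤ i → i < r → (lam (i+1)).den < (lam i).den) :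
    IsShortestOnePath ((List.range (m + 1)).map lam) ∧
    IsShortestOnePath ((List.range (r - m + 1)).map fun i => lam (m + i)) ∧
    IsShortestOnePath ([1, 1/2, 2/5, 3/8] : List ℚ) ∧
    IsShortestOnePath ([3/8, 1/3, 0] : List ℚ) := by
  let ex : ℕ → ℚ := fun i => [1, 1/2, 2/5, 3/8, 1/3, 0].getD i 0
  have hex : ∀ i < 5, OneStep (ex i) (ex (i + 1)) := by
    intro i hi; interval_cases i <;> norm_num [ex, OneStep]
  obtain ⟨hex₁, hex₂⟩ := isShortestOnePath_split_at_den_max 5 3 (by norm_num) ex hex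
    (by intro i hi; interval_cases i <;> norm_num [ex])
    (by intro i _ hi; interval_cases i <;> norm_num [ex])
  obtain ⟨hlam₁, hlam₂⟩ := isShortestOnePath_split_at_den_max r m hmr.le lam hdiff hinc hdec
  exact ⟨hlam₁, hlam₂, by simpa [ex, List.range_succ] using hex₁,
    by simpa [ex, List.range_succ] using hex₂⟩

/-- Splitting a 1-path from `1` to `0` at the (unique) maximum of the denominators
yields two shortest 1-paths; and the concrete instances
`1 > 1/2 > 2/5 > 3/8` and `3/8 > 1/3 > 0` are shortest 1-paths. -/
theorem onePath_split_at_denominator_max (r m : ℕ) (hm : 0 < m) (hmr : m < r)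
    (lam : ℕ → ℚ) (hfirst : lam 0 = 1) (hlast : lam r = 0)
    (hdiff : ∀ i < r, lam (i+1) < lam i ∧
      lam i - lam (i+1) = 1 / (((lam i).den : ℚ) * ((lam (i+1)).den : ℚ)))
    (hinc : ∀ i < m, (lam i).den < (lam (i+1)).den)
    (hdec : ∀ i, m ≤ i → i < r → (lam (i+1)).den < (lam i).den) :
    IsShortestOnePath ((List.range (m + 1)).map lam) ∧
    IsShortestOnePath ((List.range (r - m + 1)).map fun i => lam (m + i)) ∧
    IsShortestOnePath ([1, 1/2, 2/5, 3/8] : List ℚ) ∧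
    IsShortestOnePath ([3/8, 1/3, 0] : List ℚ) :=
  onePath_split_at_denominator_max_general r m hmr lam hdiff hinc hdec
end
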